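/- arXiv:1903.11711 — 7 statements merged into one kernel-verified Lean document; each statement's English description precedes it below -/
import Mathlib

section
/- Let A be a real n×n matrix, B a real n×m matrix, and C a real m×n matrix, and set R = C·B + Bᵀ·Cᵀ. Suppose R is invertible and P is an invertible (in particular, symmetric positive definite) real n×n matrix satisfying the algebraic Riccati equation P·A + Aᵀ·P + (C·A − Bᵀ·P)ᵀ·R⁻¹·(C·A − Bᵀ·P) = 0. Then Z = P⁻¹ satisfies Z·A₀ᵀ + A₀·Z + Z·Q̄·Z + B·R⁻¹·Bᵀ = 0, where A₀ = A − B·R⁻¹·C·A and Q̄ = Aᵀ·Cᵀ·R⁻¹·C·A. -/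
/-!
Conjugating the Riccati equation by `Z = P⁻¹` turns `P * A + Aᵀ * P` into `A * Z + Z * Aᵀ`, and,
since `P` is symmetric, turns the factor `C * A - Bᵀ * P` into `C * A * Z - Bᵀ` and its transpose
into `(C * A * Z - Bᵀ)ᵀ`. Expanding the quadratic term with the symmetric weight `R⁻¹` regroups
the result into the dual equation for `A₀ = A - B * R⁻¹ * (C * A)` and `Q̄ = Aᵀ * Cᵀ * R⁻¹ * (C * A)`.
-/

open Matrix

namespace Matrix

variable {n m α : Type*} [Fintype n]

theorem isSymm_mul_add_transpose_mul [CommSemiring α] (C : Matrix m n α) (B : Matrix n m α) :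
    (C * B + Bᵀ * Cᵀ).IsSymm := by
  rw [← transpose_mul]
  exact isSymm_add_transpose_self (C * B)

theorem nonsing_inv_mul_riccati_mul_nonsing_inv [DecidableEq n] [Fintype m] [CommRing α]
    (A : Matrix n n α) (B : Matrix n m α)
    (C : Matrix m n α) {S : Matrix m m α} (hS : S.IsSymm) {P : Matrix n n α} (hP : P.IsSymm)
    (hPu : IsUnit P.det) :
    P⁻¹ * (P * A + Aᵀ * P + (C * A - Bᵀ * P)ᵀ * S * (C * A - Bᵀ * P)) * P⁻¹ =
      P⁻¹ * (A - B * S * (C * A))ᵀ + (A - B * S * (C * A)) * P⁻¹ +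
        P⁻¹ * (Aᵀ * Cᵀ * S * (C * A)) * P⁻¹ + B * S * Bᵀ := by
  simp only [transpose_sub, transpose_mul, transpose_transpose, hP.eq, hS.eq, Matrix.mul_add,
    Matrix.add_mul, Matrix.mul_sub, Matrix.sub_mul, Matrix.mul_assoc,
    nonsing_inv_mul_cancel_left _ _ hPu, mul_nonsing_inv _ hPu, Matrix.mul_one]
  abel

end Matrix

theorem stmt_1_general {n m : ℕ} (A : Matrix (Fin n) (Fin n) ℝ)
    (B : Matrix (Fin n) (Fin m) ℝ) (C : Matrix (Fin m) (Fin n) ℝ)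
    (R : Matrix (Fin m) (Fin m) ℝ) (hR : R = C * B + Bᵀ * Cᵀ)
    (P : Matrix (Fin n) (Fin n) ℝ) (hP : P.PosDef) (hPu : IsUnit P.det)
    (hare : P * A + Aᵀ * P + (C * A - Bᵀ * P)ᵀ * R⁻¹ * (C * A - Bᵀ * P) = 0)
    (Z : Matrix (Fin n) (Fin n) ℝ) (hZ : Z = P⁻¹)
    (A₀ : Matrix (Fin n) (Fin n) ℝ) (hA₀ : A₀ = A - B * R⁻¹ * (C * A))
    (Qbar : Matrix (Fin n) (Fin n) ℝ) (hQbar : Qbar = Aᵀ * Cᵀ * R⁻¹ * (C * A)) :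
    Z * A₀ᵀ + A₀ * Z + Z * Qbar * Z + B * R⁻¹ * Bᵀ = 0 := by
  subst hZ hA₀ hQbar
  have hRinv : R⁻¹.IsSymm := hR ▸ (isSymm_mul_add_transpose_mul C B).inv
  have hPsymm : P.IsSymm := isHermitian_iff_isSymm.mp hP.isHermitian
  rw [← nonsing_inv_mul_riccati_mul_nonsing_inv A B C hRinv hPsymm hPu, hare,
    Matrix.mul_zero, Matrix.zero_mul]

/-- If `P` (invertible, in particular symmetric positive definite) solves the
NI ARE, then `Z = P⁻¹` solves the dual Riccati equation. -/
theorem stmt_1 {n m : ℕ} (A : Matrix (Fin n) (Fin n) ℝ)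
    (B : Matrix (Fin n) (Fin m) ℝ) (C : Matrix (Fin m) (Fin n) ℝ)
    (R : Matrix (Fin m) (Fin m) ℝ) (hR : R = C * B + Bᵀ * Cᵀ)
    (hRu : IsUnit R.det)
    (P : Matrix (Fin n) (Fin n) ℝ) (hP : P.PosDef) (hPu : IsUnit P.det)
    (hare : P * A + Aᵀ * P + (C * A - Bᵀ * P)ᵀ * R⁻¹ * (C * A - Bᵀ * P) = 0)
    (Z : Matrix (Fin n) (Fin n) ℝ) (hZ : Z = P⁻¹)
    (A₀ : Matrix (Fin n) (Fin n) ℝ) (hA₀ : A₀ = A - B * R⁻¹ * (C * A))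
    (Qbar : Matrix (Fin n) (Fin n) ℝ) (hQbar : Qbar = Aᵀ * Cᵀ * R⁻¹ * (C * A)) :
    Z * A₀ᵀ + A₀ * Z + Z * Qbar * Z + B * R⁻¹ * Bᵀ = 0 :=
  stmt_1_general A B C R hR P hP hPu hare Z hZ A₀ hA₀ Qbar hQbar
end

section
/- Let A_w, R_z, Z, and P be real n×n matrices such that I − P·Z is invertible and A_w·Z + Z·A_wᵀ + Z·R_z·Z = 0. Then I − Z·P is invertible, W := Z·(I − P·Z)⁻¹ satisfies W = (I − Z·P)⁻¹·Z, and W satisfies the Riccati equation A_w·W + W·A_wᵀ + W·R_w·W = 0, where R_w = P·A_w + A_wᵀ·P + R_z. -/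
open Matrix

/-- Construction of the auxiliary Riccati solution `W = Z(I − PZ)⁻¹`. -/
theorem stmt_3 {n : ℕ} (Aw Rz Z P : Matrix (Fin n) (Fin n) ℝ)
    (hinv : IsUnit (1 - P * Z).det)
    (hZ : Aw * Z + Z * Awᵀ + Z * Rz * Z = 0)
    (W : Matrix (Fin n) (Fin n) ℝ) (hW : W = Z * (1 - P * Z)⁻¹)
    (Rw : Matrix (Fin n) (Fin n) ℝ) (hRw : Rw = P * Aw + Awᵀ * P + Rz) :
    IsUnit (1 - Z * P).det ∧
    W = (1 - Z * P)⁻¹ * Z ∧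
    Aw * W + W * Awᵀ + W * Rw * W = 0 := by
  have hVdet : IsUnit (1 - Z * P).det := by
    rwa [Matrix.det_one_sub_mul_comm]
  have hWU : W * (1 - P * Z) = Z := by
    rw [hW, mul_assoc, Matrix.nonsing_inv_mul _ hinv, mul_one]
  have hVW : (1 - Z * P) * W = Z := by
    rw [hW, ← mul_assoc]
    have h : (1 - Z * P) * Z = Z * (1 - P * Z) := by noncomm_ring
    rw [h, mul_assoc, Matrix.mul_nonsing_inv _ hinv, mul_one]
  have hW2 : W = (1 - Z * P)⁻¹ * Z := by
    calc W = (1 - Z * P)⁻¹ * ((1 - Z * P) * W) := by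
            rw [← mul_assoc, Matrix.nonsing_inv_mul _ hVdet, one_mul]
      _ = (1 - Z * P)⁻¹ * Z := by rw [hVW]
  refine ⟨hVdet, hW2, ?_⟩
  have key : (1 - Z * P) * (Aw * W + W * Awᵀ + W * Rw * W) * (1 - P * Z) = 0 := by
    have expand : (1 - Z * P) * (Aw * W + W * Awᵀ + W * Rw * W) * (1 - P * Z)
        = (1 - Z * P) * Aw * (W * (1 - P * Z))
          + ((1 - Z * P) * W) * Awᵀ * (1 - P * Z)
          + ((1 - Z * P) * W) * Rw * (W * (1 - P * Z)) := by noncomm_ring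
    rw [expand, hWU, hVW, hRw]
    have : (1 - Z * P) * Aw * Z + Z * Awᵀ * (1 - P * Z)
        + Z * (P * Aw + Awᵀ * P + Rz) * Z
        = Aw * Z + Z * Awᵀ + Z * Rz * Z := by noncomm_ring
    rw [this, hZ]
  have h1 := Matrix.nonsing_inv_mul _ hVdet
  have h2 := Matrix.mul_nonsing_inv _ hinv
  calc Aw * W + W * Awᵀ + W * Rw * W
      = ((1 - Z * P)⁻¹ * (1 - Z * P)) * (Aw * W + W * Awᵀ + W * Rw * W)
          * ((1 - P * Z) * (1 - P * Z)⁻¹) := by rw [h1, h2, one_mul, mul_one]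
    _ = (1 - Z * P)⁻¹ * ((1 - Z * P) * (Aw * W + W * Awᵀ + W * Rw * W)
          * (1 - P * Z)) * (1 - P * Z)⁻¹ := by noncomm_ring
    _ = 0 := by rw [key, mul_zero, zero_mul]
end

section
/- Let Z and P be real symmetric positive semidefinite n×n matrices such that every eigenvalue λ ∈ ℂ of the matrix Z·P (regarded as a complex matrix via the entrywise embedding ℝ → ℂ) satisfies |λ| < 1. Then the matrix I − P·Z is invertible and W = Z·(I − P·Z)⁻¹ is a real symmetric positive semidefinite matrix. -/
/-!
Factor `Z = Bᴴ B`. The matrix `M = B P Bᴴ` is positive semidefinite and has the same nonzero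
spectrum as `Bᴴ (B P) = Z P`, so its eigenvalues lie in `[0, 1)` and `1 - M` is positive
semidefinite and invertible. The push-through identity `B (1 - P Z) = (1 - M) B` then gives
`Z (1 - P Z)⁻¹ = Bᴴ (1 - M)⁻¹ B`, a congruence of a positive semidefinite matrix.
-/

open Matrix
open scoped ComplexOrder

theorem Matrix.apply_mem_spectrum_map {n K R : Type*} [Fintype n] [DecidableEq n] [Field K]
    [CommRing R] [Nontrivial R] (f : K →+* R) {A : Matrix n n K} {μ : K}
    (hμ : μ ∈ spectrum K A) : f μ ∈ spectrum R (A.map f) := by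
  rw [mem_spectrum_iff_isRoot_charpoly] at hμ
  exact mem_spectrum_of_isRoot_charpoly (by rw [charpoly_map]; exact hμ.map)

theorem spectrum.forall_mem_mul_comm {K A : Type*} [Field K] [Ring A] [Algebra K A]
    {p : K → Prop} (h0 : p 0) {a b : A} (h : ∀ μ ∈ spectrum K (a * b), p μ) :
    ∀ μ ∈ spectrum K (b * a), p μ := by
  intro μ hμ
  by_cases hμ0 : μ = 0
  · exact hμ0 ▸ h0
  · have : μ ∈ spectrum K (a * b) \ {0} := by
      rw [spectrum.nonzero_mul_comm]; exact ⟨hμ, hμ0⟩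
    exact h μ this.1

section

variable {n 𝕜 : Type*} [Fintype n] [DecidableEq n] [RCLike 𝕜]

theorem Matrix.IsHermitian.posSemidef_one_sub {A : Matrix n n 𝕜} (hA : A.IsHermitian)
    (h : ∀ μ ∈ spectrum ℝ A, μ ≤ 1) : (1 - A).PosSemidef := by
  have hB : (1 - A).IsHermitian := isHermitian_one.sub hA
  have hspec : ∀ ν ∈ spectrum ℝ (1 - A), 0 ≤ ν := by
    rw [← map_one (algebraMap ℝ (Matrix n n 𝕜)), ← spectrum.singleton_sub_eq]
    rintro _ ⟨_, rfl, μ, hμ, rfl⟩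
    exact sub_nonneg.mpr (h μ hμ)
  rw [hB.posSemidef_iff_eigenvalues_nonneg]
  exact fun i => hspec _ (hB.eigenvalues_mem_spectrum_real i)

theorem Matrix.mul_nonsing_inv_eq_nonsing_inv_mul {m : Type*} [Fintype m] [DecidableEq m]
    {α : Type*} [CommRing α]
    {A : Matrix n n α} {B : Matrix m m α} {X : Matrix m n α}
    (hA : IsUnit A) (hB : IsUnit B) (h : X * A = B * X) : X * A⁻¹ = B⁻¹ * X := by
  calc X * A⁻¹ = B⁻¹ * (B * X) * A⁻¹ := by
        rw [← Matrix.mul_assoc, nonsing_inv_mul _ ((isUnit_iff_isUnit_det B).mp hB),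
          Matrix.one_mul]
    _ = B⁻¹ * X := by
        rw [← h, Matrix.mul_assoc, Matrix.mul_assoc,
          mul_nonsing_inv _ ((isUnit_iff_isUnit_det A).mp hA), Matrix.mul_one]

open scoped MatrixOrder in
theorem Matrix.PosSemidef.isUnit_one_sub_mul_and_mul_inv {Z P : Matrix n n 𝕜}
    (hZ : Z.PosSemidef) (hP : P.PosSemidef)
    (h : ∀ μ ∈ spectrum ℝ (Z * P), μ < 1) :
    IsUnit (1 - P * Z) ∧ (Z * (1 - P * Z)⁻¹).PosSemidef := by
  have hPZ : IsUnit (1 - P * Z) := by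
    simpa using spectrum.notMem_iff.mp fun h1 =>
      (spectrum.forall_mem_mul_comm zero_lt_one h 1 h1).false
  obtain ⟨B, rfl⟩ := CStarAlgebra.nonneg_iff_eq_star_mul_self.mp hZ.nonneg
  rw [star_eq_conjTranspose] at h hPZ ⊢
  set M := B * P * Bᴴ with hM
  have hspecM : ∀ μ ∈ spectrum ℝ M, μ < 1 :=
    spectrum.forall_mem_mul_comm zero_lt_one (a := Bᴴ) (by simpa [Matrix.mul_assoc] using h)
  have h1M : IsUnit (1 - M) := by
    simpa using spectrum.notMem_iff.mp fun h1 => (hspecM 1 h1).false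
  have hW : Bᴴ * B * (1 - P * (Bᴴ * B))⁻¹ = Bᴴ * (1 - M)⁻¹ * B := by
    rw [Matrix.mul_assoc, mul_nonsing_inv_eq_nonsing_inv_mul hPZ h1M, Matrix.mul_assoc]
    simp only [hM, Matrix.mul_sub, Matrix.sub_mul, Matrix.mul_one, Matrix.one_mul, Matrix.mul_assoc]
  refine ⟨hPZ, hW ▸ ?_⟩
  exact ((hP.mul_mul_conjTranspose_same B).isHermitian.posSemidef_one_sub
    fun μ hμ => (hspecM μ hμ).le).inv.conjTranspose_mul_mul_same B

end

/-- If `Z, P` are real symmetric positive semidefinite and every complex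
eigenvalue of `Z·P` has modulus less than 1, then `I − P·Z` is invertible and
`W = Z·(I − P·Z)⁻¹` is symmetric positive semidefinite. -/
theorem stmt_4 {n : ℕ} (Z P : Matrix (Fin n) (Fin n) ℝ)
    (hZ : Z.PosSemidef) (hP : P.PosSemidef)
    (hspec : ∀ lam : ℂ, lam ∈ spectrum ℂ ((Z * P).map (Complex.ofReal)) →
      ‖lam‖ < 1) :
    IsUnit (1 - P * Z).det ∧ (Z * (1 - P * Z)⁻¹).PosSemidef := by
  have hlt : ∀ μ ∈ spectrum ℝ (Z * P), μ < 1 := fun μ hμ =>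
    (le_abs_self μ).trans_lt <| by
      simpa using hspec _ (apply_mem_spectrum_map Complex.ofRealHom hμ)
  obtain ⟨hunit, hW⟩ := hZ.isUnit_one_sub_mul_and_mul_inv hP hlt
  exact ⟨(isUnit_iff_isUnit_det _).mp hunit, hW⟩
end

section
/- Let Z be a real symmetric positive definite n×n matrix and P a real symmetric positive semidefinite n×n matrix such that Z⁻¹ − P is positive semidefinite. Then every eigenvalue λ ∈ ℂ of the matrix Z·P (regarded as a complex matrix via the entrywise embedding ℝ → ℂ) satisfies |λ| ≤ 1. -/
/-!
Put `M = Z⁻¹`, so that `Z * P = M⁻¹ * P` with `0 ≤ P ≤ M` and `M > 0`. An eigenvector `v` of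
`M⁻¹ * P` for `λ` satisfies `P v = λ M v`, hence `λ = vᴴ P v / vᴴ M v`, a quotient of two reals
with `0 ≤ vᴴ P v ≤ vᴴ M v` and `vᴴ M v > 0`; so `λ ∈ [0, 1]`.
-/

open Matrix

open scoped ComplexOrder

namespace Matrix

variable {n : Type*} [Fintype n]

theorem PosSemidef.map_ofReal {A : Matrix n n ℝ} (hA : A.PosSemidef) :
    (A.map Complex.ofReal).PosSemidef := by
  obtain ⟨m, v, rfl⟩ := posSemidef_iff_eq_sum_vecMulVec.mp hA
  refine posSemidef_iff_eq_sum_vecMulVec.mpr ⟨m, fun i j => (v i j : ℂ), ?_⟩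
  ext a b
  simp [vecMulVec_apply, sum_apply]

variable [DecidableEq n]

theorem PosDef.map_ofReal {A : Matrix n n ℝ} (hA : A.PosDef) : (A.map Complex.ofReal).PosDef :=
  hA.posSemidef.map_ofReal.posDef_iff_isUnit.mpr (hA.isUnit.map Complex.ofRealHom.mapMatrix)

theorem map_nonsing_inv {R S : Type*} [CommRing R] [CommRing S] (f : R →+* S) {A : Matrix n n R}
    (hA : IsUnit A.det) : A⁻¹.map f = (A.map f)⁻¹ := by
  refine (inv_eq_left_inv ?_).symm
  rw [← Matrix.map_mul, nonsing_inv_mul _ hA, Matrix.map_one _ f.map_zero f.map_one]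

theorem exists_mulVec_eq_smul_of_mem_spectrum {K : Type*} [Field K] {A : Matrix n n K} {μ : K}
    (hμ : μ ∈ spectrum K A) : ∃ v : n → K, v ≠ 0 ∧ A *ᵥ v = μ • v := by
  rw [← spectrum_toLin', ← Module.End.hasEigenvalue_iff_mem_spectrum] at hμ
  obtain ⟨v, hv, hv0⟩ := hμ.exists_hasEigenvector
  exact ⟨v, hv0, by simpa using Module.End.mem_eigenspace_iff.mp hv⟩

theorem PosDef.spectrum_inv_mul_subset_Icc {𝕜 : Type*} [RCLike 𝕜] {M B : Matrix n n 𝕜}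
    (hM : M.PosDef) (hB : B.PosSemidef) (hMB : (M - B).PosSemidef) :
    spectrum 𝕜 (M⁻¹ * B) ⊆ Set.Icc 0 1 := by
  intro μ hμ
  obtain ⟨v, hv0, hv⟩ := exists_mulVec_eq_smul_of_mem_spectrum hμ
  have hBv : B *ᵥ v = μ • (M *ᵥ v) := by
    rw [← mulVec_smul, ← hv, mulVec_mulVec,
      mul_nonsing_inv_cancel_left _ _ ((isUnit_iff_isUnit_det M).mp hM.isUnit)]
  have hpos : 0 < star v ⬝ᵥ M *ᵥ v := hM.dotProduct_mulVec_pos hv0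
  have hquot : μ = (star v ⬝ᵥ B *ᵥ v) / (star v ⬝ᵥ M *ᵥ v) := by
    rw [hBv, dotProduct_smul, smul_eq_mul, mul_div_cancel_right₀ _ hpos.ne']
  have hle : star v ⬝ᵥ B *ᵥ v ≤ star v ⬝ᵥ M *ᵥ v := by
    simpa [sub_mulVec, dotProduct_sub, sub_nonneg] using hMB.dotProduct_mulVec_nonneg v
  rw [hquot]
  exact ⟨div_nonneg (hB.dotProduct_mulVec_nonneg v) hpos.le, (div_le_one₀ hpos).mpr hle⟩

end Matrix

/-- If `Z` is symmetric positive definite, `P` symmetric positive semidefinite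
and `Z⁻¹ − P` is positive semidefinite, then every complex eigenvalue of `Z·P` has
modulus at most 1. -/
theorem stmt_5 {n : ℕ} (Z P : Matrix (Fin n) (Fin n) ℝ)
    (hZ : Z.PosDef) (hP : P.PosSemidef)
    (hZP : (Z⁻¹ - P).PosSemidef) :
    ∀ lam : ℂ, lam ∈ spectrum ℂ ((Z * P).map (Complex.ofReal)) →
      ‖lam‖ ≤ 1 := by
  intro lam hlam
  have hZdet : IsUnit Z.det := hZ.det_pos.ne'.isUnit
  have hZ_eq : Z.map Complex.ofReal = (Z⁻¹.map Complex.ofReal)⁻¹ := by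
    conv_lhs => rw [← nonsing_inv_nonsing_inv Z hZdet]
    exact map_nonsing_inv Complex.ofRealHom (isUnit_nonsing_inv_det Z hZdet)
  have hmul : (Z * P).map Complex.ofReal = Z.map Complex.ofReal * P.map Complex.ofReal :=
    Matrix.map_mul (f := Complex.ofRealHom)
  rw [hmul, hZ_eq] at hlam
  have hZP_map := hZP.map_ofReal
  rw [Matrix.map_sub _ Complex.ofReal_sub] at hZP_map
  obtain ⟨h0, h1⟩ := hZ.inv.map_ofReal.spectrum_inv_mul_subset_Icc hP.map_ofReal hZP_map hlam
  exact (CStarAlgebra.norm_le_one_iff_of_nonneg lam h0).mpr h1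
end

section
/- Let A₁₁ be a real q×q matrix, A₁₂ a real q×p matrix, A₂₂ a real p×p matrix, B_f1 and B₁₁ real q×m matrices, B_f2 and B₂₂ real p×m matrices, and R an invertible symmetric real m×m matrix. Define the block matrices A_f = [[A₁₁, A₁₂],[0, A₂₂]], B_f = [B_f1; B_f2], and B̃₁ = [B₁₁; B₂₂]. Suppose there exist real p×p matrices T and S, with T − S symmetric positive definite, satisfying the Lyapunov equations −A₂₂·T − T·A₂₂ᵀ + B_f2·R·B_f2ᵀ = 0 and −A₂₂·S − S·A₂₂ᵀ + B₂₂·R⁻¹·B₂₂ᵀ = 0. Then the block matrix P_f = [[0, 0],[0, (T−S)⁻¹]] is symmetric positive semidefinite and satisfies the algebraic Riccati equation P_f·A_f + A_fᵀ·P_f + P_f·(B̃₁·R⁻¹·B̃₁ᵀ − B_f·R·B_fᵀ)·P_f = 0. -/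
/-!
Only the anti-stable block carries information. For `P = [[0, 0], [0, X]]` and an upper block
triangular `A`, the Riccati expression `P A + Aᵀ P + P G P` vanishes outside its lower right block,
where it equals `X A₂₂ + A₂₂ᵀ X + X G₂₂ X`. With `X = D⁻¹`, `D = T - S`, subtracting the two
Lyapunov equations gives `G₂₂ = -(A₂₂ D) - D A₂₂ᵀ`, and conjugating this by `D⁻¹` is exactly the
vanishing of that block. Positive semidefiniteness follows from `D⁻¹ > 0`.
-/

open Matrix

namespace Matrix

variable {l n k R : Type*}

def riccati [Fintype n] [NonUnitalNonAssocSemiring R] (P A G : Matrix n n R) : Matrix n n R :=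
  P * A + Aᵀ * P + P * G * P

theorem PosSemidef.fromBlocks_zero_zero_zero [Fintype l] [Fintype n] [DecidableEq n]
    [Ring R] [PartialOrder R] [StarRing R] {D : Matrix n n R} (hD : D.PosSemidef) :
    (fromBlocks (0 : Matrix l l R) 0 0 D).PosSemidef := by
  have hconj : fromRows (0 : Matrix l n R) 1 * D * (fromRows (0 : Matrix l n R) 1)ᴴ
      = fromBlocks 0 0 0 D := by
    rw [conjTranspose_fromRows_eq_fromCols_conjTranspose, fromRows_mul, fromRows_mul_fromCols]
    simp
  exact hconj ▸ hD.mul_mul_conjTranspose_same _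

theorem toBlocks₂₂_sub [Sub R] (M N : Matrix (l ⊕ n) (l ⊕ n) R) :
    (M - N).toBlocks₂₂ = M.toBlocks₂₂ - N.toBlocks₂₂ :=
  rfl

theorem toBlocks₂₂_fromRows_mul_mul_transpose_fromRows [Fintype k] [Semiring R]
    (A₁ C₁ : Matrix l k R) (A₂ C₂ : Matrix n k R) (M : Matrix k k R) :
    (fromRows A₁ A₂ * M * (fromRows C₁ C₂)ᵀ).toBlocks₂₂ = A₂ * M * C₂ᵀ := by
  rw [transpose_fromRows, fromRows_mul, fromRows_mul_fromCols, toBlocks_fromBlocks₂₂]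

theorem riccati_fromBlocks_zero_zero_zero [Fintype l] [Fintype n] [NonUnitalNonAssocSemiring R]
    (X A₂₂ : Matrix n n R) (A₁₁ : Matrix l l R) (A₁₂ : Matrix l n R)
    (G : Matrix (l ⊕ n) (l ⊕ n) R) :
    riccati (fromBlocks 0 0 0 X) (fromBlocks A₁₁ A₁₂ 0 A₂₂) G
      = fromBlocks 0 0 0 (riccati X A₂₂ G.toBlocks₂₂) := by
  rw [← fromBlocks_toBlocks G]
  simp [riccati, fromBlocks_transpose, fromBlocks_multiply, fromBlocks_add]

theorem riccati_inv_eq_zero_of_lyapunov [Fintype n] [DecidableEq n] [CommRing R]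
    {D A G : Matrix n n R} (hD : IsUnit D.det) (hG : G = -(A * D) - D * Aᵀ) :
    riccati D⁻¹ A G = 0 := by
  have hleft : D⁻¹ * (A * D) * D⁻¹ = D⁻¹ * A := by
    rw [Matrix.mul_assoc, Matrix.mul_assoc, mul_nonsing_inv _ hD, Matrix.mul_one]
  have hright : D⁻¹ * (D * Aᵀ) * D⁻¹ = Aᵀ * D⁻¹ := by
    rw [← Matrix.mul_assoc, nonsing_inv_mul _ hD, Matrix.one_mul]
  rw [riccati, hG, Matrix.mul_sub, Matrix.sub_mul, Matrix.mul_neg, Matrix.neg_mul, hleft, hright]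
  abel

end Matrix

theorem stmt_7_general {q p m : ℕ}
    (A₁₁ : Matrix (Fin q) (Fin q) ℝ) (A₁₂ : Matrix (Fin q) (Fin p) ℝ)
    (A₂₂ : Matrix (Fin p) (Fin p) ℝ)
    (Bf1 B₁₁ : Matrix (Fin q) (Fin m) ℝ) (Bf2 B₂₂ : Matrix (Fin p) (Fin m) ℝ)
    (R : Matrix (Fin m) (Fin m) ℝ)
    (Af : Matrix (Fin q ⊕ Fin p) (Fin q ⊕ Fin p) ℝ)
    (hAf : Af = fromBlocks A₁₁ A₁₂ 0 A₂₂)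
    (Bf : Matrix (Fin q ⊕ Fin p) (Fin m) ℝ) (hBf : Bf = fromRows Bf1 Bf2)
    (B₁t : Matrix (Fin q ⊕ Fin p) (Fin m) ℝ) (hB₁t : B₁t = fromRows B₁₁ B₂₂)
    (T S : Matrix (Fin p) (Fin p) ℝ) (hTS : (T - S).PosDef)
    (hT : -(A₂₂ * T) - T * A₂₂ᵀ + Bf2 * R * Bf2ᵀ = 0)
    (hS : -(A₂₂ * S) - S * A₂₂ᵀ + B₂₂ * R⁻¹ * B₂₂ᵀ = 0)
    (Pf : Matrix (Fin q ⊕ Fin p) (Fin q ⊕ Fin p) ℝ)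
    (hPf : Pf = fromBlocks 0 0 0 (T - S)⁻¹) :
    Pf.PosSemidef ∧
    Pf * Af + Afᵀ * Pf + Pf * (B₁t * R⁻¹ * B₁tᵀ - Bf * R * Bfᵀ) * Pf = 0 := by
  subst hAf hBf hB₁t hPf
  refine ⟨hTS.inv.posSemidef.fromBlocks_zero_zero_zero, ?_⟩
  have hG : (fromRows B₁₁ B₂₂ * R⁻¹ * (fromRows B₁₁ B₂₂)ᵀ
      - fromRows Bf1 Bf2 * R * (fromRows Bf1 Bf2)ᵀ).toBlocks₂₂
      = -(A₂₂ * (T - S)) - (T - S) * A₂₂ᵀ := by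
    rw [toBlocks₂₂_sub, toBlocks₂₂_fromRows_mul_mul_transpose_fromRows,
      toBlocks₂₂_fromRows_mul_mul_transpose_fromRows]
    linear_combination (norm := skip) hS - hT
    rw [Matrix.mul_sub, Matrix.sub_mul]
    abel
  change riccati _ _ _ = 0
  rw [riccati_fromBlocks_zero_zero_zero,
    riccati_inv_eq_zero_of_lyapunov hTS.det_pos.ne'.isUnit hG, fromBlocks_zero]

/-- Implication 2) ⟹ 3) in the NI state feedback control lemma:
solutions `T, S` of the two Lyapunov equations with `T − S > 0` yield the positive
semidefinite Riccati solution `P_f = [[0,0],[0,(T−S)⁻¹]]`. -/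
theorem stmt_7 {q p m : ℕ}
    (A₁₁ : Matrix (Fin q) (Fin q) ℝ) (A₁₂ : Matrix (Fin q) (Fin p) ℝ)
    (A₂₂ : Matrix (Fin p) (Fin p) ℝ)
    (Bf1 B₁₁ : Matrix (Fin q) (Fin m) ℝ) (Bf2 B₂₂ : Matrix (Fin p) (Fin m) ℝ)
    (R : Matrix (Fin m) (Fin m) ℝ) (hRsym : Rᵀ = R) (hRu : IsUnit R.det)
    (Af : Matrix (Fin q ⊕ Fin p) (Fin q ⊕ Fin p) ℝ)
    (hAf : Af = fromBlocks A₁₁ A₁₂ 0 A₂₂)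
    (Bf : Matrix (Fin q ⊕ Fin p) (Fin m) ℝ) (hBf : Bf = fromRows Bf1 Bf2)
    (B₁t : Matrix (Fin q ⊕ Fin p) (Fin m) ℝ) (hB₁t : B₁t = fromRows B₁₁ B₂₂)
    (T S : Matrix (Fin p) (Fin p) ℝ) (hTS : (T - S).PosDef)
    (hT : -(A₂₂ * T) - T * A₂₂ᵀ + Bf2 * R * Bf2ᵀ = 0)
    (hS : -(A₂₂ * S) - S * A₂₂ᵀ + B₂₂ * R⁻¹ * B₂₂ᵀ = 0)
    (Pf : Matrix (Fin q ⊕ Fin p) (Fin q ⊕ Fin p) ℝ)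
    (hPf : Pf = fromBlocks 0 0 0 (T - S)⁻¹) :
    Pf.PosSemidef ∧
    Pf * Af + Afᵀ * Pf + Pf * (B₁t * R⁻¹ * B₁tᵀ - Bf * R * Bfᵀ) * Pf = 0 :=
  stmt_7_general A₁₁ A₁₂ A₂₂ Bf1 B₁₁ Bf2 B₂₂ R Af hAf Bf hBf B₁t hB₁t T S hTS hT hS Pf hPf
end

section
/- Let A, A_k be real n×n matrices, B₁ a real n×m matrix, B₂ a real n×r matrix, B_k a real n×m matrix, C₁, C₂ real m×n matrices, C_k a real r×n matrix, and D₂₁ a real m×m matrix. Set R = C₁·B₁ + B₁ᵀ·C₁ᵀ and assume R is invertible. Define the closed-loop matrices A_c = [[A, B₂·C_k],[B_k·C₂, A_k]], B_c = [B₁; B_k·D₂₁], C_c = [C₁, 0]. Suppose the real symmetric 2n×2n matrix Σ = [[Σ₁₁, Σ₁₂],[Σ₁₂ᵀ, Σ₂₂]] (blocks n×n) is positive definite and satisfies Σ·A_c + A_cᵀ·Σ + (B_cᵀ·Σ − C_c·A_c)ᵀ·R⁻¹·(B_cᵀ·Σ − C_c·A_c) = 0. Define Ẽ = −Σ₂₂⁻¹·Σ₁₂ᵀ,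 F = C_k·Ẽ, and P = Σ₁₁ − Σ₁₂·Σ₂₂⁻¹·Σ₁₂ᵀ. Then P is symmetric positive definite and satisfies P·(A + B₂·F) + (A + B₂·F)ᵀ·P + Q̃ᵀ·R⁻¹·Q̃ = 0, where Q̃ = C₁·(A + B₂·F) − B₁ᵀ·P. -/
/-!
Conjugate everything by `W = [I; Ẽ]`. Since `Ẽ = -Σ₂₂⁻¹Σ₁₂ᵀ` eliminates the second block row,
`Σ W = [P; 0]` with `P` the Schur complement, and `A_c W = [A + B₂F; *]`. Hence `Wᵀ Σ W = P` is
positive definite (`W` is injective), and `Wᵀ (ARE) W` is exactly the state-feedback Riccati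
equation for `P`: the unknown lower block of `A_c W` is killed by the zero block of `Σ W`, and
`C_c = [C₁, 0]` only sees the upper block.
-/

open Matrix

theorem Matrix.transpose_mul_riccati_mul {ι κ μ α : Type*} [Fintype ι] [Fintype μ] [CommRing α]
    {S : Matrix ι ι α} (hS : Sᵀ = S) (M : Matrix ι ι α) (B : Matrix ι μ α) (C : Matrix μ ι α)
    (Q : Matrix μ μ α) (W : Matrix ι κ α) :
    Wᵀ * (S * M + Mᵀ * S + (Bᵀ * S - C * M)ᵀ * Q * (Bᵀ * S - C * M)) * W =
      (S * W)ᵀ * (M * W) + (M * W)ᵀ * (S * W) +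
        (Bᵀ * (S * W) - C * (M * W))ᵀ * Q * (Bᵀ * (S * W) - C * (M * W)) := by
  simp only [Matrix.mul_add, Matrix.add_mul, Matrix.transpose_mul, Matrix.transpose_sub,
    Matrix.sub_mul, Matrix.mul_sub, hS, Matrix.mul_assoc]

theorem Matrix.fromBlocks_mul_fromRows_neg_inv_mul {ι κ α : Type*} [Fintype ι] [Fintype κ]
    [DecidableEq ι] [DecidableEq κ] [CommRing α]
    (A : Matrix ι ι α) (B : Matrix ι κ α) (C : Matrix κ ι α) {D : Matrix κ κ α}
    (hD : IsUnit D.det) :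
    fromBlocks A B C D * fromRows (1 : Matrix ι ι α) (-(D⁻¹ * C)) =
      fromRows (A - B * D⁻¹ * C) 0 := by
  rw [fromBlocks_mul_fromRows, Matrix.mul_neg, Matrix.mul_neg, ← Matrix.mul_assoc,
    ← Matrix.mul_assoc, mul_nonsing_inv _ hD]
  simp [sub_eq_add_neg]

theorem Matrix.PosDef.schur_complement_of_fromBlocks {ι κ K : Type*} [Fintype ι] [Fintype κ]
    [DecidableEq ι] [DecidableEq κ] [Field K] [PartialOrder K] [StarRing K]
    {A : Matrix ι ι K} {B : Matrix ι κ K} {D : Matrix κ κ K}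
    (h : (fromBlocks A B Bᴴ D).PosDef) : (A - B * D⁻¹ * Bᴴ).PosDef := by
  have hD : D.PosDef := h.submatrix Sum.inr_injective
  have hW : Function.Injective (fromRows (1 : Matrix ι ι K) (-(D⁻¹ * Bᴴ))).mulVec := by
    intro x y hxy
    simpa using congrArg (fun v => v ∘ Sum.inl) hxy
  have := h.conjTranspose_mul_mul_same hW
  rwa [Matrix.mul_assoc,
    fromBlocks_mul_fromRows_neg_inv_mul _ _ _ ((isUnit_iff_isUnit_det D).mp hD.isUnit),
    conjTranspose_fromRows_eq_fromCols_conjTranspose, fromCols_mul_fromRows, conjTranspose_one,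
    Matrix.one_mul, Matrix.mul_zero, add_zero] at this

theorem stmt_10_general {n m r : ℕ}
    (A Ak : Matrix (Fin n) (Fin n) ℝ)
    (B₁ Bk : Matrix (Fin n) (Fin m) ℝ) (B₂ : Matrix (Fin n) (Fin r) ℝ)
    (C₁ C₂ : Matrix (Fin m) (Fin n) ℝ) (Ck : Matrix (Fin r) (Fin n) ℝ)
    (D₂₁ : Matrix (Fin m) (Fin m) ℝ)
    (R : Matrix (Fin m) (Fin m) ℝ)
    (Ac : Matrix (Fin n ⊕ Fin n) (Fin n ⊕ Fin n) ℝ)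
    (hAc : Ac = fromBlocks A (B₂ * Ck) (Bk * C₂) Ak)
    (Bc : Matrix (Fin n ⊕ Fin n) (Fin m) ℝ) (hBc : Bc = fromRows B₁ (Bk * D₂₁))
    (Cc : Matrix (Fin m) (Fin n ⊕ Fin n) ℝ) (hCc : Cc = fromCols C₁ 0)
    (S₁₁ S₁₂ S₂₂ : Matrix (Fin n) (Fin n) ℝ)
    (Sg : Matrix (Fin n ⊕ Fin n) (Fin n ⊕ Fin n) ℝ)
    (hSg : Sg = fromBlocks S₁₁ S₁₂ S₁₂ᵀ S₂₂) (hSgpd : Sg.PosDef)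
    (hric : Sg * Ac + Acᵀ * Sg + (Bcᵀ * Sg - Cc * Ac)ᵀ * R⁻¹ * (Bcᵀ * Sg - Cc * Ac) = 0)
    (Et : Matrix (Fin n) (Fin n) ℝ) (hEt : Et = -(S₂₂⁻¹ * S₁₂ᵀ))
    (F : Matrix (Fin r) (Fin n) ℝ) (hF : F = Ck * Et)
    (P : Matrix (Fin n) (Fin n) ℝ) (hP : P = S₁₁ - S₁₂ * S₂₂⁻¹ * S₁₂ᵀ) :
    P.PosDef ∧
    P * (A + B₂ * F) + (A + B₂ * F)ᵀ * P +
      (C₁ * (A + B₂ * F) - B₁ᵀ * P)ᵀ * R⁻¹ * (C₁ * (A + B₂ * F) - B₁ᵀ * P) = 0 := by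
  subst hAc hBc hCc hSg
  have hSgpd' : (fromBlocks S₁₁ S₁₂ S₁₂ᴴ S₂₂).PosDef := by
    rwa [conjTranspose_eq_transpose_of_trivial]
  have hPpd : P.PosDef := by
    rw [hP, ← conjTranspose_eq_transpose_of_trivial S₁₂]
    exact hSgpd'.schur_complement_of_fromBlocks
  refine ⟨hPpd, ?_⟩
  have hS₂₂ : IsUnit S₂₂.det :=
    (isUnit_iff_isUnit_det _).mp (hSgpd'.submatrix Sum.inr_injective).isUnit
  set W : Matrix (Fin n ⊕ Fin n) (Fin n) ℝ := fromRows 1 Et with hW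
  have hSW : fromBlocks S₁₁ S₁₂ S₁₂ᵀ S₂₂ * W = fromRows P 0 := by
    rw [hW, hEt, hP]
    exact fromBlocks_mul_fromRows_neg_inv_mul _ _ _ hS₂₂
  have hAcW : fromBlocks A (B₂ * Ck) (Bk * C₂) Ak * W =
      fromRows (A + B₂ * F) (Bk * C₂ + Ak * Et) := by
    rw [hW, fromBlocks_mul_fromRows, hF]
    simp [Matrix.mul_assoc]
  have hPsymm : Pᵀ = P := (isHermitian_iff_isSymm.mp hPpd.1).eq
  have hSgsymm := (isHermitian_iff_isSymm.mp hSgpd.1).eq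
  have key := congrArg (fun X => Wᵀ * X * W) hric
  rw [transpose_mul_riccati_mul hSgsymm] at key
  simp only [hSW, hAcW, transpose_fromRows, fromCols_mul_fromRows, hPsymm, transpose_zero,
    Matrix.mul_zero, Matrix.zero_mul, add_zero] at key
  rwa [← neg_sub, transpose_neg, Matrix.neg_mul, Matrix.neg_mul, Matrix.mul_neg, neg_neg] at key

/-- First half of the necessity part of the NI output feedback synthesis
theorem: from a positive definite solution `Σ` of the closed-loop NI ARE, the Schur
complement `P = S₁₁ − S₁₂S₂₂⁻¹S₁₂ᵀ` is positive definite and solves the state-feedback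
Riccati equation with gain `F = C_k·Ẽ`, `Ẽ = −S₂₂⁻¹S₁₂ᵀ`. -/
theorem stmt_10 {n m r : ℕ}
    (A Ak : Matrix (Fin n) (Fin n) ℝ)
    (B₁ Bk : Matrix (Fin n) (Fin m) ℝ) (B₂ : Matrix (Fin n) (Fin r) ℝ)
    (C₁ C₂ : Matrix (Fin m) (Fin n) ℝ) (Ck : Matrix (Fin r) (Fin n) ℝ)
    (D₂₁ : Matrix (Fin m) (Fin m) ℝ)
    (R : Matrix (Fin m) (Fin m) ℝ) (hR : R = C₁ * B₁ + B₁ᵀ * C₁ᵀ) (hRu : IsUnit R.det)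
    (Ac : Matrix (Fin n ⊕ Fin n) (Fin n ⊕ Fin n) ℝ)
    (hAc : Ac = fromBlocks A (B₂ * Ck) (Bk * C₂) Ak)
    (Bc : Matrix (Fin n ⊕ Fin n) (Fin m) ℝ) (hBc : Bc = fromRows B₁ (Bk * D₂₁))
    (Cc : Matrix (Fin m) (Fin n ⊕ Fin n) ℝ) (hCc : Cc = fromCols C₁ 0)
    (S₁₁ S₁₂ S₂₂ : Matrix (Fin n) (Fin n) ℝ)
    (Sg : Matrix (Fin n ⊕ Fin n) (Fin n ⊕ Fin n) ℝ)
    (hSg : Sg = fromBlocks S₁₁ S₁₂ S₁₂ᵀ S₂₂) (hSgpd : Sg.PosDef)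
    (hric : Sg * Ac + Acᵀ * Sg + (Bcᵀ * Sg - Cc * Ac)ᵀ * R⁻¹ * (Bcᵀ * Sg - Cc * Ac) = 0)
    (Et : Matrix (Fin n) (Fin n) ℝ) (hEt : Et = -(S₂₂⁻¹ * S₁₂ᵀ))
    (F : Matrix (Fin r) (Fin n) ℝ) (hF : F = Ck * Et)
    (P : Matrix (Fin n) (Fin n) ℝ) (hP : P = S₁₁ - S₁₂ * S₂₂⁻¹ * S₁₂ᵀ) :
    P.PosDef ∧
    P * (A + B₂ * F) + (A + B₂ * F)ᵀ * P +
      (C₁ * (A + B₂ * F) - B₁ᵀ * P)ᵀ * R⁻¹ * (C₁ * (A + B₂ * F) - B₁ᵀ * P) = 0 :=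
  stmt_10_general A Ak B₁ Bk B₂ C₁ C₂ Ck D₂₁ R Ac hAc Bc hBc Cc hCc S₁₁ S₁₂ S₂₂ Sg hSg hSgpd hric Et
    hEt F hF P hP
end

section
/- Let A, A_k be real n×n matrices, B₁ a real n×m matrix, B₂ a real n×r matrix, B_k a real n×m matrix, C₁, C₂ real m×n matrices, C_k a real r×n matrix, and D₂₁ a real m×m matrix. Set R = C₁·B₁ + B₁ᵀ·C₁ᵀ and assume R is invertible. Define A_c = [[A, B₂·C_k],[B_k·C₂, A_k]], B_c = [B₁; B_k·D₂₁], C_c = [C₁, 0]. Suppose the real symmetric 2n×2n matrix Σ = [[Σ₁₁, Σ₁₂],[Σ₁₂ᵀ, Σ₂₂]] (blocks n×n) is positive definite and satisfies Σ·A_c + A_cᵀ·Σ + (B_cᵀ·Σ − C_c·A_c)ᵀ·R⁻¹·(B_cᵀ·Σ − C_c·A_c) = 0. Define Ē = Σ₁₁⁻¹·Σ₁₂, L = Ē·B_k, and Z = Σ₁₁⁻¹. Then Z is symmetric positive definite and satisfies Z·(A + L·C₂)ᵀ + (A + L·C₂)·Z + Q̄·R⁻¹·Q̄ᵀ = 0,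 where Q̄ = B₁ + L·D₂₁ − Z·Aᵀ·C₁ᵀ. -/
/-!
The (1,1) block of the closed-loop Riccati equation is a Riccati equation for `S₁₁`, in which
`S₁₁ A + S₁₂ B_k C₂ = S₁₁ (A + L C₂)` and the cross term is `S₁₁ Q̄`, because `L = S₁₁⁻¹ S₁₂ B_k`.
The congruence `X ↦ Z X Z` with `Z = S₁₁⁻¹` turns it into the output-injection Riccati equation,
and `Z` is positive definite as the inverse of a principal block of `Σ`.
-/

open Matrix

theorem toBlocks₁₁_add {α n o l p : Type*} [Add α] (M N : Matrix (n ⊕ o) (l ⊕ p) α) :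
    toBlocks₁₁ (M + N) = toBlocks₁₁ M + toBlocks₁₁ N :=
  rfl

variable {α : Type*} [CommRing α] {n o m : Type*} [Fintype n] [Fintype o] [Fintype m]

omit [Fintype n] [Fintype o] in
theorem toBlocks₁₁_transpose_mul_mul (M : Matrix m (n ⊕ o) α) (N : Matrix m m α) :
    toBlocks₁₁ (Mᵀ * N * M) = M.toCols₁ᵀ * N * M.toCols₁ := by
  ext i j
  simp [toBlocks₁₁, toCols₁, mul_apply]

theorem toBlocks₁₁_closedLoop_riccati (S₁₁ : Matrix n n α) (S₁₂ : Matrix n o α)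
    (S₂₂ : Matrix o o α) (A : Matrix n n α) (X : Matrix n o α) (Y : Matrix o n α)
    (Ak : Matrix o o α) (B₁ : Matrix n m α) (B₂ : Matrix o m α) (C₁ : Matrix m n α)
    (N : Matrix m m α) (hS : S₁₁.IsSymm) :
    toBlocks₁₁ (fromBlocks S₁₁ S₁₂ S₁₂ᵀ S₂₂ * fromBlocks A X Y Ak
      + (fromBlocks A X Y Ak)ᵀ * fromBlocks S₁₁ S₁₂ S₁₂ᵀ S₂₂
      + ((fromRows B₁ B₂)ᵀ * fromBlocks S₁₁ S₁₂ S₁₂ᵀ S₂₂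
          - fromCols C₁ (0 : Matrix m o α) * fromBlocks A X Y Ak)ᵀ * N
        * ((fromRows B₁ B₂)ᵀ * fromBlocks S₁₁ S₁₂ S₁₂ᵀ S₂₂
          - fromCols C₁ (0 : Matrix m o α) * fromBlocks A X Y Ak))
    = S₁₁ * A + S₁₂ * Y + (S₁₁ * A + S₁₂ * Y)ᵀ
      + (S₁₁ * B₁ + S₁₂ * B₂ - Aᵀ * C₁ᵀ) * N * (S₁₁ * B₁ + S₁₂ * B₂ - Aᵀ * C₁ᵀ)ᵀ := by
  have hW : ((fromRows B₁ B₂)ᵀ * fromBlocks S₁₁ S₁₂ S₁₂ᵀ S₂₂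
      - fromCols C₁ (0 : Matrix m o α) * fromBlocks A X Y Ak).toCols₁
      = B₁ᵀ * S₁₁ + B₂ᵀ * S₁₂ᵀ - C₁ * A := by
    rw [transpose_fromRows, fromCols_mul_fromBlocks, fromCols_mul_fromBlocks]
    ext i j
    simp [toCols₁]
  rw [toBlocks₁₁_add, toBlocks₁₁_add, toBlocks₁₁_transpose_mul_mul, hW]
  simp [fromBlocks_multiply, fromBlocks_transpose, hS.eq]

theorem riccati_congr_inv {K : Type*} [Field K] [DecidableEq n] {S F : Matrix n n K}
    {Q : Matrix n m K} {N : Matrix m m K} (hS : S.IsSymm) (hdet : IsUnit S.det)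
    (h : S * F + (S * F)ᵀ + S * Q * N * (S * Q)ᵀ = 0) :
    S⁻¹ * Fᵀ + F * S⁻¹ + Q * N * Qᵀ = 0 := by
  have := congrArg (S⁻¹ * · * S⁻¹) h
  simp only [transpose_mul, hS.eq, Matrix.mul_add, Matrix.add_mul, Matrix.mul_assoc,
    mul_nonsing_inv _ hdet, Matrix.mul_zero, Matrix.zero_mul] at this
  simp only [← Matrix.mul_assoc, nonsing_inv_mul _ hdet, Matrix.one_mul, Matrix.mul_one] at this
  rwa [add_comm (F * S⁻¹)] at this

theorem stmt_11_general {n m r : ℕ}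
    (A Ak : Matrix (Fin n) (Fin n) ℝ)
    (B₁ Bk : Matrix (Fin n) (Fin m) ℝ) (B₂ : Matrix (Fin n) (Fin r) ℝ)
    (C₁ C₂ : Matrix (Fin m) (Fin n) ℝ) (Ck : Matrix (Fin r) (Fin n) ℝ)
    (D₂₁ : Matrix (Fin m) (Fin m) ℝ)
    (R : Matrix (Fin m) (Fin m) ℝ)
    (Ac : Matrix (Fin n ⊕ Fin n) (Fin n ⊕ Fin n) ℝ)
    (hAc : Ac = fromBlocks A (B₂ * Ck) (Bk * C₂) Ak)
    (Bc : Matrix (Fin n ⊕ Fin n) (Fin m) ℝ) (hBc : Bc = fromRows B₁ (Bk * D₂₁))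
    (Cc : Matrix (Fin m) (Fin n ⊕ Fin n) ℝ) (hCc : Cc = fromCols C₁ 0)
    (S₁₁ S₁₂ S₂₂ : Matrix (Fin n) (Fin n) ℝ)
    (Sg : Matrix (Fin n ⊕ Fin n) (Fin n ⊕ Fin n) ℝ)
    (hSg : Sg = fromBlocks S₁₁ S₁₂ S₁₂ᵀ S₂₂) (hSgpd : Sg.PosDef)
    (hric : Sg * Ac + Acᵀ * Sg + (Bcᵀ * Sg - Cc * Ac)ᵀ * R⁻¹ * (Bcᵀ * Sg - Cc * Ac) = 0)
    (Eb : Matrix (Fin n) (Fin n) ℝ) (hEb : Eb = S₁₁⁻¹ * S₁₂)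
    (L : Matrix (Fin n) (Fin m) ℝ) (hL : L = Eb * Bk)
    (Z : Matrix (Fin n) (Fin n) ℝ) (hZ : Z = S₁₁⁻¹)
    (Qb : Matrix (Fin n) (Fin m) ℝ) (hQb : Qb = B₁ + L * D₂₁ - Z * Aᵀ * C₁ᵀ) :
    Z.PosDef ∧
    Z * (A + L * C₂)ᵀ + (A + L * C₂) * Z + Qb * R⁻¹ * Qbᵀ = 0 := by
  subst hSg hAc hBc hCc
  have hS₁₁ : S₁₁.PosDef := hSgpd.submatrix Sum.inl_injective
  have hsymm : S₁₁.IsSymm := hS₁₁.1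
  have hdet : IsUnit S₁₁.det := (isUnit_iff_isUnit_det S₁₁).mp hS₁₁.isUnit
  refine ⟨hZ ▸ hS₁₁.inv, ?_⟩
  have h₁₁ := congrArg toBlocks₁₁ hric
  rw [toBlocks₁₁_closedLoop_riccati _ _ _ _ _ _ _ _ _ _ _ hsymm] at h₁₁
  have hF : S₁₁ * (A + L * C₂) = S₁₁ * A + S₁₂ * (Bk * C₂) := by
    rw [hL, hEb, Matrix.mul_add, ← Matrix.mul_assoc, ← Matrix.mul_assoc, ← Matrix.mul_assoc,
      mul_nonsing_inv _ hdet, Matrix.one_mul, Matrix.mul_assoc]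
  have hQ : S₁₁ * Qb = S₁₁ * B₁ + S₁₂ * (Bk * D₂₁) - Aᵀ * C₁ᵀ := by
    simp only [hQb, hL, hEb, hZ, Matrix.mul_add, Matrix.mul_sub, ← Matrix.mul_assoc,
      mul_nonsing_inv _ hdet, Matrix.one_mul]
  rw [← hF, ← hQ] at h₁₁
  exact hZ ▸ riccati_congr_inv hsymm hdet h₁₁

/-- Second half of the necessity part of the NI output feedback synthesis
theorem: from a positive definite solution `Σ` of the closed-loop NI ARE, the matrix
`Z = S₁₁⁻¹` is positive definite and solves the output-injection Riccati equation with
injection gain `L = Ē·B_k`, `Ē = S₁₁⁻¹S₁₂`. -/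
theorem stmt_11 {n m r : ℕ}
    (A Ak : Matrix (Fin n) (Fin n) ℝ)
    (B₁ Bk : Matrix (Fin n) (Fin m) ℝ) (B₂ : Matrix (Fin n) (Fin r) ℝ)
    (C₁ C₂ : Matrix (Fin m) (Fin n) ℝ) (Ck : Matrix (Fin r) (Fin n) ℝ)
    (D₂₁ : Matrix (Fin m) (Fin m) ℝ)
    (R : Matrix (Fin m) (Fin m) ℝ) (hR : R = C₁ * B₁ + B₁ᵀ * C₁ᵀ) (hRu : IsUnit R.det)
    (Ac : Matrix (Fin n ⊕ Fin n) (Fin n ⊕ Fin n) ℝ)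
    (hAc : Ac = fromBlocks A (B₂ * Ck) (Bk * C₂) Ak)
    (Bc : Matrix (Fin n ⊕ Fin n) (Fin m) ℝ) (hBc : Bc = fromRows B₁ (Bk * D₂₁))
    (Cc : Matrix (Fin m) (Fin n ⊕ Fin n) ℝ) (hCc : Cc = fromCols C₁ 0)
    (S₁₁ S₁₂ S₂₂ : Matrix (Fin n) (Fin n) ℝ)
    (Sg : Matrix (Fin n ⊕ Fin n) (Fin n ⊕ Fin n) ℝ)
    (hSg : Sg = fromBlocks S₁₁ S₁₂ S₁₂ᵀ S₂₂) (hSgpd : Sg.PosDef)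
    (hric : Sg * Ac + Acᵀ * Sg + (Bcᵀ * Sg - Cc * Ac)ᵀ * R⁻¹ * (Bcᵀ * Sg - Cc * Ac) = 0)
    (Eb : Matrix (Fin n) (Fin n) ℝ) (hEb : Eb = S₁₁⁻¹ * S₁₂)
    (L : Matrix (Fin n) (Fin m) ℝ) (hL : L = Eb * Bk)
    (Z : Matrix (Fin n) (Fin n) ℝ) (hZ : Z = S₁₁⁻¹)
    (Qb : Matrix (Fin n) (Fin m) ℝ) (hQb : Qb = B₁ + L * D₂₁ - Z * Aᵀ * C₁ᵀ) :
    Z.PosDef ∧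
    Z * (A + L * C₂)ᵀ + (A + L * C₂) * Z + Qb * R⁻¹ * Qbᵀ = 0 :=
  stmt_11_general A Ak B₁ Bk B₂ C₁ C₂ Ck D₂₁ R Ac hAc Bc hBc Cc hCc S₁₁ S₁₂ S₂₂ Sg hSg hSgpd hric Eb
    hEb L hL Z hZ Qb hQb
end
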